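/- With the scaling γ = ln(e + α^{2/n}) and weight transformation w ↦ αw, the logarithmic forest distance d_α(i,j) = γ(α−1) log_α (√(f_ii(α)f_jj(α)) / f_ij(α)) converges, as α → 0⁺, to the shortest-path distance d^s(i,j). -/

import Mathlib

/-!
Factor the off-diagonal forest polynomial as `f_ij(α) = α^m T(α)` with `T(0) = f_ij^{(m)} ≠ 0`,
while `f_ii(0) = f_jj(0) = 1`. Since `log α → -∞`, the logarithm of a function with a nonzero
limit is negligible against `log α`, so `log_α f_ii, log_α f_jj → 0` and `log_α f_ij → m`;
hence `log_α (√(f_ii f_jj) / f_ij) → -m`, and the prefactor `γ (α - 1) → 1 · (-1)`.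
-/

open Filter Finset Topology Real

theorem Finset.sum_range_mul_pow_eq_pow_mul_sum {R : Type*} [CommSemiring R] {c : ℕ → R}
    {m N : ℕ} (hc : ∀ p < m, c p = 0) (hmN : m ≤ N) (x : R) :
    ∑ p ∈ range N, c p * x ^ p = x ^ m * ∑ q ∈ range (N - m), c (m + q) * x ^ q := by
  obtain ⟨k, rfl⟩ := Nat.exists_eq_add_of_le hmN
  rw [sum_range_add, sum_eq_zero fun p hp => by rw [hc p (mem_range.1 hp), zero_mul], zero_add,
    Nat.add_sub_cancel_left, mul_sum]
  exact sum_congr rfl fun q _ => by ring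

theorem tendsto_sum_range_mul_pow_nhds_zero (c : ℕ → ℝ) {N : ℕ} (hN : 0 < N) :
    Tendsto (fun x : ℝ => ∑ p ∈ range N, c p * x ^ p) (𝓝 0) (𝓝 (c 0)) := by
  have hcont : Continuous (fun x : ℝ => ∑ p ∈ range N, c p * x ^ p) := by fun_prop
  have h0 : ∑ p ∈ range N, c p * (0 : ℝ) ^ p = c 0 :=
    (sum_eq_single_of_mem 0 (mem_range.2 hN) fun p _ hp => by simp [hp]).trans (by simp)
  simpa [h0] using hcont.tendsto 0

theorem Real.tendsto_log_div_log_nhdsGT_zero {g : ℝ → ℝ} {c : ℝ}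
    (hg : Tendsto g (𝓝[>] 0) (𝓝 c)) (hc : c ≠ 0) :
    Tendsto (fun x => log (g x) / log x) (𝓝[>] 0) (𝓝 0) :=
  (hg.log hc).div_atBot tendsto_log_nhdsGT_zero

theorem Real.tendsto_log_pow_mul_div_log_nhdsGT_zero {g : ℝ → ℝ} {c : ℝ}
    (hg : Tendsto g (𝓝[>] 0) (𝓝 c)) (hc : c ≠ 0) (m : ℕ) :
    Tendsto (fun x => log (x ^ m * g x) / log x) (𝓝[>] 0) (𝓝 m) := by
  have h := (tendsto_log_div_log_nhdsGT_zero hg hc).const_add (m : ℝ)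
  rw [add_zero] at h
  refine h.congr' ?_
  filter_upwards [Ioo_mem_nhdsGT one_pos, hg.eventually_ne hc] with x hx hgx
  have hlog : log x ≠ 0 := (log_neg hx.1 hx.2).ne
  rw [log_mul (pow_ne_zero _ hx.1.ne') hgx, log_pow]
  field_simp

theorem Real.tendsto_log_exp_one_add_rpow_mul_sub_one {r : ℝ} (hr : 0 < r) :
    Tendsto (fun x : ℝ => log (exp 1 + x ^ r) * (x - 1)) (𝓝[>] 0) (𝓝 (-1)) := by
  have hpow : Tendsto (fun x : ℝ => x ^ r) (𝓝[>] 0) (𝓝 0) := by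
    simpa [zero_rpow hr.ne'] using
      (continuousAt_rpow_const 0 r (Or.inr hr.le)).tendsto.mono_left nhdsWithin_le_nhds
  have hγ : Tendsto (fun x => log (exp 1 + x ^ r)) (𝓝[>] 0) (𝓝 1) := by
    simpa using (tendsto_const_nhds.add hpow).log (by positivity : exp 1 + 0 ≠ 0)
  simpa using hγ.mul ((tendsto_id.mono_left nhdsWithin_le_nhds).sub_const 1)

theorem Real.log_sqrt_mul_div {a b c : ℝ} (ha : 0 < a) (hb : 0 < b) (hc : c ≠ 0) :
    log (√(a * b) / c) = (log a + log b) / 2 - log c := by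
  rw [log_div (sqrt_ne_zero'.2 (mul_pos ha hb)) hc, log_sqrt (mul_pos ha hb).le,
    log_mul ha.ne' hb.ne']

theorem stmt_15_general (n : ℕ) (f : Fin n → Fin n → ℕ → ℝ) (i j : Fin n)
    (m : ℕ) (hmn : m < n) (hlow : ∀ p, p < m → f i j p = 0)
    (hm : 0 < f i j m) (hii : f i i 0 = 1) (hjj : f j j 0 = 1) :
    Tendsto (fun α : ℝ =>
        Real.log (Real.exp 1 + α ^ ((2 : ℝ) / n)) * (α - 1) *
          (Real.log (Real.sqrt ((∑ p ∈ Finset.range n, f i i p * α ^ p) *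
              (∑ p ∈ Finset.range n, f j j p * α ^ p)) /
            (∑ p ∈ Finset.range n, f i j p * α ^ p)) / Real.log α))
      (nhdsWithin 0 (Set.Ioi 0)) (nhds (m : ℝ)) := by
  have hn : 0 < n := by omega
  have hSii : Tendsto (fun α : ℝ => ∑ p ∈ range n, f i i p * α ^ p) (𝓝[>] 0) (𝓝 1) :=
    hii ▸ (tendsto_sum_range_mul_pow_nhds_zero _ hn).mono_left nhdsWithin_le_nhds
  have hSjj : Tendsto (fun α : ℝ => ∑ p ∈ range n, f j j p * α ^ p) (𝓝[>] 0) (𝓝 1) :=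
    hjj ▸ (tendsto_sum_range_mul_pow_nhds_zero _ hn).mono_left nhdsWithin_le_nhds
  have hT : Tendsto (fun α : ℝ => ∑ q ∈ range (n - m), f i j (m + q) * α ^ q) (𝓝[>] 0)
      (𝓝 (f i j m)) :=
    (tendsto_sum_range_mul_pow_nhds_zero (fun q => f i j (m + q)) (Nat.sub_pos_of_lt hmn)).mono_left
      nhdsWithin_le_nhds
  have hlim := (tendsto_log_exp_one_add_rpow_mul_sub_one (by positivity : (0 : ℝ) < 2 / n)).mul
    ((((tendsto_log_div_log_nhdsGT_zero hSii one_ne_zero).add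
      (tendsto_log_div_log_nhdsGT_zero hSjj one_ne_zero)).div_const 2).sub
      (tendsto_log_pow_mul_div_log_nhdsGT_zero hT hm.ne' m))
  rw [show (-1 : ℝ) * ((0 + 0) / 2 - m) = m by ring] at hlim
  refine hlim.congr' ?_
  filter_upwards [self_mem_nhdsWithin, hSii.eventually_const_lt one_pos,
    hSjj.eventually_const_lt one_pos, hT.eventually_ne hm.ne'] with α (hα : 0 < α) hi hj hTα
  rw [sum_range_mul_pow_eq_pow_mul_sum hlow hmn.le,
    log_sqrt_mul_div hi hj (mul_ne_zero (pow_ne_zero _ hα.ne') hTα)]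
  ring

/-- With the scaling `γ = ln(e + α^{2/n})` and weight transformation `w ↦ αw`,
the logarithmic forest distance
`d_α(i,j) = γ(α−1) log_α (√(f_ii(α) f_jj(α)) / f_ij(α))` converges, as
`α → 0⁺`, to the shortest-path distance `m = d^s(i,j)`.  Here `f i j p` is
the forest coefficient `f_ij^{(p)} ≥ 0`, with `f_ij^{(p)} = 0` for `p < m`,
`f_ij^{(m)} > 0`, and `f_ii^{(0)} = f_jj^{(0)} = 1`. -/
theorem stmt_15 (n : ℕ) (hn : 2 ≤ n) (f : Fin n → Fin n → ℕ → ℝ)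
    (hnn : ∀ i j p, 0 ≤ f i j p) (i j : Fin n) (hij : i ≠ j)
    (m : ℕ) (hmn : m < n) (hlow : ∀ p, p < m → f i j p = 0)
    (hm : 0 < f i j m) (hii : f i i 0 = 1) (hjj : f j j 0 = 1) :
    Tendsto (fun α : ℝ =>
        Real.log (Real.exp 1 + α ^ ((2 : ℝ) / n)) * (α - 1) *
          (Real.log (Real.sqrt ((∑ p ∈ Finset.range n, f i i p * α ^ p) *
              (∑ p ∈ Finset.range n, f j j p * α ^ p)) /
            (∑ p ∈ Finset.range n, f i j p * α ^ p)) / Real.log α))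
      (nhdsWithin 0 (Set.Ioi 0)) (nhds (m : ℝ)) :=
  stmt_15_general n f i j m hmn hlow hm hii hjj
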